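/- arXiv:1301.0120 — 10 statements merged into one kernel-verified Lean document; each statement's English description precedes it below -/
import Mathlib

section
/- Let μ be a Young diagram. If μ has at most one column (i.e. μ_i ≤ 1 for all i), then 2·ct(μ) = −(|μ|² − |μ|). If μ has at most one row (i.e. l(μ) ≤ 1), then 2·ct(μ) = |μ|² − |μ|. If μ has at least two nonempty rows and at least two nonempty columns, then 2·|ct(μ)| < |μ|² − |μ|. -/
/-- The content of a Young diagram: `ct(μ) = Σ_{(i,j)∈μ} (j − i)`. -/
def ct (μ : YoungDiagram) : ℤ := ∑ c ∈ μ.cells, ((c.2 : ℤ) - (c.1 : ℤ))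

lemma cells_eq_biUnion (μ : YoungDiagram) :
    μ.cells = (Finset.range (μ.colLen 0)).biUnion
      (fun i => {i} ×ˢ Finset.range (μ.rowLen i)) := by
  ext ⟨i, j⟩
  simp only [Finset.mem_biUnion, Finset.mem_range, Finset.mem_product,
    Finset.mem_singleton, YoungDiagram.mem_cells]
  constructor
  · intro h
    exact ⟨i, YoungDiagram.mem_iff_lt_colLen.mp
      (μ.up_left_mem le_rfl (Nat.zero_le j) h), rfl,
      YoungDiagram.mem_iff_lt_rowLen.mp h⟩
  · rintro ⟨a, _, rfl, hj⟩
    exact YoungDiagram.mem_iff_lt_rowLen.mpr hj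

lemma sum_cells {M : Type*} [AddCommMonoid M] (μ : YoungDiagram) (f : ℕ × ℕ → M) :
    ∑ c ∈ μ.cells, f c
      = ∑ i ∈ Finset.range (μ.colLen 0), ∑ j ∈ Finset.range (μ.rowLen i), f (i, j) := by
  rw [cells_eq_biUnion, Finset.sum_biUnion]
  · refine Finset.sum_congr rfl fun i _ => ?_
    rw [Finset.singleton_product, Finset.sum_map]
    rfl
  · intro a _ b _ hab
    simp only [Function.onFun]
    rw [Finset.disjoint_left]
    rintro ⟨x, y⟩ hx hy
    simp only [Finset.mem_product, Finset.mem_singleton] at hx hy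
    exact hab (hx.1 ▸ hy.1 ▸ rfl)

lemma card_eq_sum_rowLen (μ : YoungDiagram) :
    μ.card = ∑ i ∈ Finset.range (μ.colLen 0), μ.rowLen i := by
  rw [YoungDiagram.card, Finset.card_eq_sum_ones, sum_cells]
  simp

lemma gauss (n : ℕ) : 2 * (∑ j ∈ Finset.range n, (j : ℤ)) = n * (n - 1) := by
  induction n with
  | zero => simp
  | succ k ih => rw [Finset.sum_range_succ]; push_cast; push_cast at ih; ring_nf; ring_nf at ih; omega

lemma two_mul_ct (μ : YoungDiagram) :
    2 * ct μ = ∑ i ∈ Finset.range (μ.colLen 0),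
      ((μ.rowLen i : ℤ) * (μ.rowLen i - 1) - 2 * μ.rowLen i * i) := by
  rw [ct, sum_cells, Finset.mul_sum]
  refine Finset.sum_congr rfl fun i _ => ?_
  rw [Finset.mul_sum]
  have : ∀ j ∈ Finset.range (μ.rowLen i), (2 : ℤ) * ((j : ℤ) - i) = 2 * j - 2 * i :=
    fun j _ => by ring
  rw [Finset.sum_congr rfl this, Finset.sum_sub_distrib, ← Finset.mul_sum, gauss]
  simp [Finset.sum_const, mul_comm]
  ring

lemma ct_transpose (μ : YoungDiagram) : ct μ.transpose = -ct μ := by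
  unfold ct
  rw [← Finset.sum_neg_distrib]
  have : μ.transpose.cells = μ.cells.map (Equiv.prodComm ℕ ℕ).toEmbedding := rfl
  rw [this, Finset.sum_map]
  exact Finset.sum_congr rfl fun c _ => by simp [Equiv.prodComm]

lemma card_transpose (μ : YoungDiagram) : μ.transpose.card = μ.card := by
  have : μ.transpose.cells = μ.cells.map (Equiv.prodComm ℕ ℕ).toEmbedding := rfl
  rw [YoungDiagram.card, this, Finset.card_map]

lemma key_bound (μ : YoungDiagram) (hc : 2 ≤ μ.colLen 0) :
    2 * ct μ ≤ (μ.card : ℤ) * (μ.card - 2) := by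
  set K := μ.colLen 0 with hK
  have hr1 : 1 ≤ μ.rowLen 1 := by
    rw [Nat.succ_le_iff, ← YoungDiagram.mem_iff_lt_rowLen]
    exact YoungDiagram.mem_iff_lt_colLen.mpr (by omega)
  have hcard : μ.card = ∑ i ∈ Finset.range K, μ.rowLen i := card_eq_sum_rowLen μ
  -- r 0 ≤ card - 1
  have hr0 : μ.rowLen 0 + 1 ≤ μ.card := by
    have : μ.rowLen 0 + μ.rowLen 1 ≤ ∑ i ∈ Finset.range K, μ.rowLen i := by
      have h2 : Finset.range 2 ⊆ Finset.range K := Finset.range_subset_range.mpr hc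
      calc μ.rowLen 0 + μ.rowLen 1 = ∑ i ∈ Finset.range 2, μ.rowLen i := by
            rw [Finset.sum_range_succ, Finset.sum_range_one]
        _ ≤ _ := Finset.sum_le_sum_of_subset h2
    omega
  have hstep : 2 * ct μ ≤ ∑ i ∈ Finset.range K, (μ.rowLen i : ℤ) * (μ.rowLen 0 - 1) := by
    rw [two_mul_ct]
    refine Finset.sum_le_sum fun i _ => ?_
    have h1 : (μ.rowLen i : ℤ) ≤ μ.rowLen 0 := by
      exact_mod_cast μ.rowLen_anti 0 i (Nat.zero_le i)
    have h2 : (0 : ℤ) ≤ 2 * μ.rowLen i * i := by positivity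
    nlinarith [Int.natCast_nonneg (μ.rowLen i)]
  calc 2 * ct μ ≤ ∑ i ∈ Finset.range K, (μ.rowLen i : ℤ) * (μ.rowLen 0 - 1) := hstep
    _ = (μ.card : ℤ) * (μ.rowLen 0 - 1) := by
        rw [← Finset.sum_mul, hcard]; push_cast; ring
    _ ≤ (μ.card : ℤ) * (μ.card - 2) := by
        have h1 : (μ.rowLen 0 : ℤ) + 1 ≤ μ.card := by exact_mod_cast hr0
        have h2 : (0 : ℤ) ≤ μ.card := Int.natCast_nonneg _
        nlinarith

/-- If μ has at most one column, then 2·ct(μ) = −(|μ|² − |μ|);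
if μ has at most one row, then 2·ct(μ) = |μ|² − |μ|;
if μ has at least two nonempty rows and at least two nonempty columns,
then 2·|ct(μ)| < |μ|² − |μ|. -/
theorem stmt1 (μ : YoungDiagram) :
    ((∀ i, μ.rowLen i ≤ 1) → 2 * ct μ = -((μ.card : ℤ) ^ 2 - (μ.card : ℤ))) ∧
    (μ.colLen 0 ≤ 1 → 2 * ct μ = (μ.card : ℤ) ^ 2 - (μ.card : ℤ)) ∧
    (2 ≤ μ.colLen 0 → 2 ≤ μ.rowLen 0 →
      2 * |ct μ| < (μ.card : ℤ) ^ 2 - (μ.card : ℤ)) := by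
  refine ⟨?_, ?_, ?_⟩
  · intro h
    have hrow : ∀ i ∈ Finset.range (μ.colLen 0), μ.rowLen i = 1 := by
      intro i hi
      have : (i, 0) ∈ μ := YoungDiagram.mem_iff_lt_colLen.mpr (Finset.mem_range.mp hi)
      have h1 : 1 ≤ μ.rowLen i := Nat.succ_le_iff.mpr (YoungDiagram.mem_iff_lt_rowLen.mp this)
      exact le_antisymm (h i) h1
    have hcard : μ.card = μ.colLen 0 := by
      rw [card_eq_sum_rowLen, Finset.sum_congr rfl hrow]; simp
    rw [two_mul_ct, hcard]
    have : ∀ i ∈ Finset.range (μ.colLen 0),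
        ((μ.rowLen i : ℤ) * (μ.rowLen i - 1) - 2 * μ.rowLen i * i) = -2 * i := by
      intro i hi; rw [hrow i hi]; push_cast; ring
    rw [Finset.sum_congr rfl this]
    have := gauss (μ.colLen 0)
    have heq : ∑ i ∈ Finset.range (μ.colLen 0), (-2 * (i:ℤ))
        = -2 * ∑ i ∈ Finset.range (μ.colLen 0), (i:ℤ) := by rw [Finset.mul_sum]
    rw [heq]
    nlinarith [gauss (μ.colLen 0)]
  · intro h
    rw [two_mul_ct, card_eq_sum_rowLen]
    interval_cases h' : μ.colLen 0
    · simp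
    · simp only [Finset.sum_range_one]
      push_cast
      ring
  · intro hc hr
    have h1 : 2 * ct μ ≤ (μ.card : ℤ) * (μ.card - 2) := key_bound μ hc
    have h2 : 2 * ct μ.transpose ≤ (μ.transpose.card : ℤ) * (μ.transpose.card - 2) :=
      key_bound μ.transpose (by rwa [YoungDiagram.colLen_transpose])
    rw [ct_transpose, card_transpose] at h2
    have hpos : 1 ≤ μ.card :=
      Finset.card_pos.mpr ⟨(0, 0), YoungDiagram.mem_cells _ |>.mpr
        (YoungDiagram.mem_iff_lt_colLen.mpr (by omega))⟩
    have hn : (1 : ℤ) ≤ μ.card := by exact_mod_cast hpos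
    rcases abs_cases (ct μ) with ⟨habs, _⟩ | ⟨habs, _⟩ <;> rw [habs] <;> nlinarith
end

section
/- Let μ be a Young diagram with |μ| = n, where n > 1, and let s be an integer with 0 ≤ s and n > 2s. Then μ has at most one cell whose hook length equals n − s. -/
/-- The hook length of a (0-indexed) cell `(i,j)` of a Young diagram `μ`:
in 1-based terms it is `(μ_i − j) + (μ'_j − i) + 1`. -/
def hookLen (μ : YoungDiagram) (i j : ℕ) : ℕ :=
  (μ.rowLen i - (j + 1)) + (μ.colLen j - (i + 1)) + 1

/-- The hook of a cell: the cell itself, cells to its right in its row,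
and cells below it in its column. -/
def hookSet (μ : YoungDiagram) (i j : ℕ) : Finset (ℕ × ℕ) :=
  μ.cells.filter (fun c => (c.1 = i ∧ j ≤ c.2) ∨ (c.2 = j ∧ i ≤ c.1))

lemma hookSet_eq (μ : YoungDiagram) (i j : ℕ) :
    hookSet μ i j =
      (Finset.Ico j (μ.rowLen i)).image (fun y => (i, y)) ∪
      (Finset.Ico i (μ.colLen j)).image (fun x => (x, j)) := by
  ext ⟨a, b⟩
  simp only [hookSet, Finset.mem_filter, Finset.mem_union, Finset.mem_image,
    Finset.mem_Ico, YoungDiagram.mem_cells, Prod.mk.injEq]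
  constructor
  · rintro ⟨hm, ⟨rfl, hj⟩ | ⟨rfl, hi⟩⟩
    · exact Or.inl ⟨b, ⟨hj, YoungDiagram.mem_iff_lt_rowLen.mp hm⟩, rfl, rfl⟩
    · exact Or.inr ⟨a, ⟨hi, YoungDiagram.mem_iff_lt_colLen.mp hm⟩, rfl, rfl⟩
  · rintro (⟨y, ⟨hj, hy⟩, rfl, rfl⟩ | ⟨x, ⟨hi, hx⟩, rfl, rfl⟩)
    · exact ⟨YoungDiagram.mem_iff_lt_rowLen.mpr hy, Or.inl ⟨rfl, hj⟩⟩
    · exact ⟨YoungDiagram.mem_iff_lt_colLen.mpr hx, Or.inr ⟨rfl, hi⟩⟩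

lemma hookSet_card (μ : YoungDiagram) {i j : ℕ} (h : (i, j) ∈ μ) :
    (hookSet μ i j).card = hookLen μ i j := by
  have hr : j < μ.rowLen i := YoungDiagram.mem_iff_lt_rowLen.mp h
  have hc : i < μ.colLen j := YoungDiagram.mem_iff_lt_colLen.mp h
  rw [hookSet_eq]
  rw [Finset.card_union]
  have hinter :
      ((Finset.Ico j (μ.rowLen i)).image (fun y => (i, y)) ∩
        (Finset.Ico i (μ.colLen j)).image (fun x => (x, j))) = {(i, j)} := by
    ext ⟨a, b⟩
    simp only [Finset.mem_inter, Finset.mem_image, Finset.mem_Ico,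
      Finset.mem_singleton, Prod.mk.injEq]
    constructor
    · rintro ⟨⟨y, ⟨h1, h2⟩, rfl, rfl⟩, ⟨x, ⟨h3, h4⟩, rfl, rfl⟩⟩
      exact ⟨rfl, rfl⟩
    · rintro ⟨h1, h2⟩
      subst h1; subst h2
      exact ⟨⟨_, ⟨le_rfl, hr⟩, rfl, rfl⟩, ⟨_, ⟨le_rfl, hc⟩, rfl, rfl⟩⟩
  rw [hinter]
  rw [Finset.card_image_of_injective _ (by intro x y hxy; simpa using hxy),
    Finset.card_image_of_injective _ (by intro x y hxy; simpa using hxy)]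
  simp only [Nat.card_Ico, Finset.card_singleton, hookLen]
  omega

lemma hookLen_lt_row (μ : YoungDiagram) {i j1 j2 : ℕ} (hj : j1 < j2)
    (h : (i, j2) ∈ μ) : hookLen μ i j2 < hookLen μ i j1 := by
  have hr : j2 < μ.rowLen i := YoungDiagram.mem_iff_lt_rowLen.mp h
  have hc : i < μ.colLen j2 := YoungDiagram.mem_iff_lt_colLen.mp h
  have hmono : μ.colLen j2 ≤ μ.colLen j1 := μ.colLen_anti j1 j2 hj.le
  unfold hookLen
  omega

lemma hookLen_lt_col (μ : YoungDiagram) {i1 i2 j : ℕ} (hi : i1 < i2)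
    (h : (i2, j) ∈ μ) : hookLen μ i2 j < hookLen μ i1 j := by
  have hc : i2 < μ.colLen j := YoungDiagram.mem_iff_lt_colLen.mp h
  have hr : j < μ.rowLen i2 := YoungDiagram.mem_iff_lt_rowLen.mp h
  have hmono : μ.rowLen i2 ≤ μ.rowLen i1 := μ.rowLen_anti i1 i2 hi.le
  unfold hookLen
  omega

/-- A Young diagram of size `n > 1` has at most one cell of hook length `n − s`
when `n > 2s ≥ 0`. -/
theorem stmt2 (μ : YoungDiagram) (n s : ℕ) (hcard : μ.card = n)
    (hn : 1 < n) (hs : 2 * s < n) :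
    (μ.cells.filter (fun c => hookLen μ c.1 c.2 = n - s)).card ≤ 1 := by
  by_contra hcon
  push_neg at hcon
  obtain ⟨c1, h1, c2, h2, hne⟩ := Finset.one_lt_card.mp hcon
  simp only [Finset.mem_filter, YoungDiagram.mem_cells] at h1 h2
  obtain ⟨hm1, hh1⟩ := h1
  obtain ⟨hm2, hh2⟩ := h2
  obtain ⟨i1, j1⟩ := c1
  obtain ⟨i2, j2⟩ := c2
  simp only at hh1 hh2
  -- distinct rows
  have hrow : i1 ≠ i2 := by
    rintro rfl
    rcases Nat.lt_trichotomy j1 j2 with h | rfl | h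
    · have := hookLen_lt_row μ h hm2; omega
    · exact hne rfl
    · have := hookLen_lt_row μ h hm1; omega
  have hcol : j1 ≠ j2 := by
    rintro rfl
    rcases Nat.lt_trichotomy i1 i2 with h | rfl | h
    · have := hookLen_lt_col μ h hm2; omega
    · exact hne rfl
    · have := hookLen_lt_col μ h hm1; omega
  set H1 := hookSet μ i1 j1 with hH1
  set H2 := hookSet μ i2 j2 with hH2
  clear_value H1 H2
  have hc1 : H1.card = n - s := by rw [hH1, hookSet_card μ hm1, hh1]
  have hc2 : H2.card = n - s := by rw [hH2, hookSet_card μ hm2, hh2]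
  -- intersection has at most one element
  have hint_mem : ∀ x ∈ H1 ∩ H2,
      (x = (i1, j2) ∧ i2 ≤ i1 ∧ j1 ≤ j2) ∨ (x = (i2, j1) ∧ i1 ≤ i2 ∧ j2 ≤ j1) := by
    rintro ⟨a, b⟩ hx
    simp only [Finset.mem_inter, hH1, hH2, hookSet, Finset.mem_filter] at hx
    obtain ⟨⟨_, hx1⟩, ⟨_, hx2⟩⟩ := hx
    rcases hx1 with ⟨rfl, hb1⟩ | ⟨rfl, ha1⟩ <;> rcases hx2 with ⟨h, hb2⟩ | ⟨rfl, ha2⟩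
    · exact absurd h hrow
    · exact Or.inl ⟨rfl, ha2, hb1⟩
    · exact Or.inr ⟨by rw [h], h ▸ ha1, hb2⟩
    · exact absurd rfl hcol
  have hint_card : (H1 ∩ H2).card ≤ 1 := by
    apply Finset.card_le_one.mpr
    intro x hx y hy
    rcases hint_mem x hx with ⟨hx', hle, _⟩ | ⟨hx', hle, _⟩ <;>
      rcases hint_mem y hy with ⟨hy', hle', _⟩ | ⟨hy', hle', _⟩
    · rw [hx', hy']
    · exact absurd (le_antisymm hle' hle) hrow
    · exact absurd (le_antisymm hle hle') hrow
    · rw [hx', hy']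
  have hsub : H1 ∪ H2 ⊆ μ.cells := by
    intro x hx
    rcases Finset.mem_union.mp hx with h | h
    · rw [hH1] at h; exact Finset.mem_of_mem_filter _ h
    · rw [hH2] at h; exact Finset.mem_of_mem_filter _ h
  have hucard : (H1 ∪ H2).card ≤ n := by
    calc (H1 ∪ H2).card ≤ μ.cells.card := Finset.card_le_card hsub
    _ = n := hcard
  -- forced equalities
  have key : ∀ a b c u : ℕ, a = n - s → b = n - s → u + c = a + b → c ≤ 1 →
      u ≤ n → c = 1 ∧ u = n := by
    intro a b c u ha hb hu hc hun
    omega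
  have hunion' : (H1 ∪ H2).card + (H1 ∩ H2).card = H1.card + H2.card :=
    Finset.card_union_add_card_inter _ _
  obtain ⟨hint1, hueq⟩ := key _ _ _ _ hc1 hc2 hunion' hint_card hucard
  have hUeq : H1 ∪ H2 = μ.cells :=
    Finset.eq_of_subset_of_card_le hsub (le_of_eq (hcard.trans hueq.symm))
  -- (0,0) is a cell of μ
  have h00 : (0, 0) ∈ μ := μ.up_left_mem (Nat.zero_le _) (Nat.zero_le _) hm1
  have h00' : ((0 : ℕ), (0 : ℕ)) ∈ H1 ∪ H2 := by
    rw [hUeq]; exact YoungDiagram.mem_cells _ |>.mpr h00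
  -- the intersection is nonempty, giving orientation
  obtain ⟨x, hx⟩ := Finset.card_pos.mp (by omega : 0 < (H1 ∩ H2).card)
  rcases hint_mem x hx with ⟨_, hle1, hle2⟩ | ⟨_, hle1, hle2⟩ <;>
  · rcases Finset.mem_union.mp h00' with h | h <;>
    · simp only [hH1, hH2, hookSet, Finset.mem_filter] at h
      obtain ⟨_, h⟩ := h
      omega
end

section
/- Let λ be a Young diagram with |λ| = s, and let n, l be integers with n > 2s, n > 1, and 0 ≤ l ≤ n − s − 1. Then there exists a unique pair of positive integers (i, j) such that: λ_i + 1 ≤ j − 1 + n − s − l; if i ≥ 2 then j − 1 + n − s − l ≤ λ_{i−1}; λ'_j + 1 ≤ i + l; and if j ≥ 2 then i + l ≤ λ'_{j−1}. (This is the unique admissible position to insert an (n−s)-hook with leg length l into λ, producing the unique Young diagram of size n from which deleting that hook recovers λ.) -/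
lemma aux_colLen_le_card (lam : YoungDiagram) (j : ℕ) : lam.colLen j ≤ lam.card := by
  rw [lam.colLen_eq_card]
  exact Finset.card_le_card (Finset.filter_subset _ _)

lemma aux_colLen_eq_iff (lam : YoungDiagram) (x m : ℕ) :
    lam.colLen m = x ↔ lam.rowLen x ≤ m ∧ (1 ≤ x → m < lam.rowLen (x - 1)) := by
  constructor
  · intro h
    constructor
    · by_contra hc
      push_neg at hc
      have := YoungDiagram.mem_iff_lt_colLen.mp (YoungDiagram.mem_iff_lt_rowLen.mpr hc)
      omega
    · intro hx
      have h1 : (x - 1, m) ∈ lam := YoungDiagram.mem_iff_lt_colLen.mpr (by omega)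
      exact YoungDiagram.mem_iff_lt_rowLen.mp h1
  · rintro ⟨h1, h2⟩
    have hle : lam.colLen m ≤ x := by
      by_contra hc
      push_neg at hc
      have h3 : (x, m) ∈ lam := YoungDiagram.mem_iff_lt_colLen.mpr hc
      have := YoungDiagram.mem_iff_lt_rowLen.mp h3
      omega
    rcases Nat.eq_zero_or_pos x with h0 | hp
    · omega
    · have h3 : (x - 1, m) ∈ lam := YoungDiagram.mem_iff_lt_rowLen.mpr (h2 hp)
      have := YoungDiagram.mem_iff_lt_colLen.mp h3
      omega

lemma aux_rowLen_eq_iff (lam : YoungDiagram) (y r : ℕ) :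
    lam.rowLen r = y ↔ lam.colLen y ≤ r ∧ (1 ≤ y → r < lam.colLen (y - 1)) := by
  constructor
  · intro h
    constructor
    · by_contra hc
      push_neg at hc
      have := YoungDiagram.mem_iff_lt_rowLen.mp (YoungDiagram.mem_iff_lt_colLen.mpr hc)
      omega
    · intro hy
      have h1 : (r, y - 1) ∈ lam := YoungDiagram.mem_iff_lt_rowLen.mpr (by omega)
      exact YoungDiagram.mem_iff_lt_colLen.mp h1
  · rintro ⟨h1, h2⟩
    have hle : lam.rowLen r ≤ y := by
      by_contra hc
      push_neg at hc
      have h3 : (r, y) ∈ lam := YoungDiagram.mem_iff_lt_rowLen.mpr hc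
      have := YoungDiagram.mem_iff_lt_colLen.mp h3
      omega
    rcases Nat.eq_zero_or_pos y with h0 | hp
    · omega
    · have h3 : (r, y - 1) ∈ lam := YoungDiagram.mem_iff_lt_colLen.mpr (h2 hp)
      have := YoungDiagram.mem_iff_lt_rowLen.mp h3
      omega

lemma aux_fixed_point (G : ℕ → ℕ) (hm : Monotone G) (B : ℕ) (hb : ∀ x, G x ≤ B) :
    ∃ x, G x = x := by
  by_contra h
  push_neg at h
  have hiter : ∀ m : ℕ, G^[m] 0 ≤ G^[m + 1] 0 := by
    intro m
    induction m with
    | zero => simpa using Nat.zero_le _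
    | succ p ih =>
        rw [Function.iterate_succ_apply', Function.iterate_succ_apply']
        exact hm ih
  have hstrict : ∀ m, m ≤ G^[m] 0 := by
    intro m
    induction m with
    | zero => simp
    | succ p ih =>
        have h1 := hiter p
        have h2 : G (G^[p] 0) ≠ G^[p] 0 := h _
        rw [Function.iterate_succ_apply'] at h1 ⊢
        omega
  have h1 := hstrict (B + 1)
  have h2 : G^[B + 1] 0 ≤ B := by
    rw [Function.iterate_succ_apply']
    exact hb _
  omega

/-- Let λ be a Young diagram with |λ| = s, and n, l integers with n > 2s, n > 1,
0 ≤ l ≤ n − s − 1. There is a unique pair of positive integers (i, j)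
(1-based indices) satisfying: λ_i + 1 ≤ j − 1 + n − s − l;
if i ≥ 2 then j − 1 + n − s − l ≤ λ_{i−1}; λ'_j + 1 ≤ i + l;
and if j ≥ 2 then i + l ≤ λ'_{j−1}.
(Here `lam.rowLen (i-1)` is the 1-based row length λ_i, and
`lam.colLen (j-1)` is the 1-based column length λ'_j.) -/
theorem stmt3 (lam : YoungDiagram) (n l : ℤ)
    (hn2 : 2 * (lam.card : ℤ) < n) (hn1 : 1 < n)
    (hl0 : 0 ≤ l) (hl : l ≤ n - (lam.card : ℤ) - 1) :
    ∃! p : ℕ × ℕ, 1 ≤ p.1 ∧ 1 ≤ p.2 ∧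
      (lam.rowLen (p.1 - 1) : ℤ) + 1 ≤ (p.2 : ℤ) - 1 + n - (lam.card : ℤ) - l ∧
      (2 ≤ p.1 → (p.2 : ℤ) - 1 + n - (lam.card : ℤ) - l ≤ (lam.rowLen (p.1 - 2) : ℤ)) ∧
      (lam.colLen (p.2 - 1) : ℤ) + 1 ≤ (p.1 : ℤ) + l ∧
      (2 ≤ p.2 → (p.1 : ℤ) + l ≤ (lam.colLen (p.2 - 2) : ℤ)) := by
  classical
  set s := lam.card with hs
  obtain ⟨b, hb⟩ : ∃ b : ℕ, n - (s : ℤ) - l = (b : ℤ) + 1 :=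
    ⟨(n - (s : ℤ) - l - 1).toNat, by omega⟩
  obtain ⟨k, hk⟩ : ∃ k : ℕ, l = (k : ℤ) := ⟨l.toNat, by omega⟩
  have hsk : s + 1 ≤ b + 1 + k := by
    have : (s : ℤ) + 1 ≤ (b : ℤ) + 1 + (k : ℤ) := by omega
    exact_mod_cast this
  -- the key reformulation of the conditions
  have hP : ∀ i j : ℕ, 1 ≤ i → 1 ≤ j →
      (((lam.rowLen (i - 1) : ℤ) + 1 ≤ (j : ℤ) - 1 + n - (s : ℤ) - l ∧
        (2 ≤ i → (j : ℤ) - 1 + n - (s : ℤ) - l ≤ (lam.rowLen (i - 2) : ℤ)) ∧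
        (lam.colLen (j - 1) : ℤ) + 1 ≤ (i : ℤ) + l ∧
        (2 ≤ j → (i : ℤ) + l ≤ (lam.colLen (j - 2) : ℤ))) ↔
      (lam.colLen ((j - 1) + b) = i - 1 ∧ lam.rowLen ((i - 1) + k) = j - 1)) := by
    intro i j hi hj
    have hji : ((j - 1 : ℕ) : ℤ) = (j : ℤ) - 1 := by omega
    have hii : ((i - 1 : ℕ) : ℤ) = (i : ℤ) - 1 := by omega
    rw [aux_colLen_eq_iff, aux_rowLen_eq_iff]
    have e1 : ((lam.rowLen (i-1) : ℤ) + 1 ≤ (j : ℤ) - 1 + n - (s : ℤ) - l) ↔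
        lam.rowLen (i-1) ≤ (j - 1) + b := by
      push_cast; omega
    have e2 : (2 ≤ i → (j : ℤ) - 1 + n - (s : ℤ) - l ≤ (lam.rowLen (i - 2) : ℤ)) ↔
        (1 ≤ i - 1 → (j - 1) + b < lam.rowLen (i - 1 - 1)) := by
      constructor
      · intro h h2
        have := h (by omega)
        have : ((j - 1 : ℕ) + b : ℤ) < (lam.rowLen (i - 2) : ℤ) := by push_cast; omega
        have hidx : i - 1 - 1 = i - 2 := by omega
        rw [hidx]
        exact_mod_cast this
      · intro h h2
        have := h (by omega)
        have hidx : i - 1 - 1 = i - 2 := by omega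
        rw [hidx] at this
        have : ((j - 1 : ℕ) + b : ℤ) < (lam.rowLen (i - 2) : ℤ) := by exact_mod_cast this
        push_cast at this ⊢
        omega
    have e3 : ((lam.colLen (j-1) : ℤ) + 1 ≤ (i : ℤ) + l) ↔
        lam.colLen (j-1) ≤ (i - 1) + k := by
      push_cast; omega
    have e4 : (2 ≤ j → (i : ℤ) + l ≤ (lam.colLen (j - 2) : ℤ)) ↔
        (1 ≤ j - 1 → (i - 1) + k < lam.colLen (j - 1 - 1)) := by
      constructor
      · intro h h2
        have := h (by omega)
        have : ((i - 1 : ℕ) + k : ℤ) < (lam.colLen (j - 2) : ℤ) := by push_cast; omega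
        have hidx : j - 1 - 1 = j - 2 := by omega
        rw [hidx]
        exact_mod_cast this
      · intro h h2
        have := h (by omega)
        have hidx : j - 1 - 1 = j - 2 := by omega
        rw [hidx] at this
        have : ((i - 1 : ℕ) + k : ℤ) < (lam.colLen (j - 2) : ℤ) := by exact_mod_cast this
        push_cast at this ⊢
        omega
    rw [e1, e2, e3, e4]
    constructor
    · rintro ⟨h1, h2, h3, h4⟩
      exact ⟨⟨h1, h2⟩, h3, h4⟩
    · rintro ⟨⟨h1, h2⟩, h3, h4⟩
      exact ⟨h1, h2, h3, h4⟩
  -- existence of a fixed point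
  set G : ℕ → ℕ := fun x => lam.colLen (lam.rowLen (x + k) + b) with hG
  have hmono : Monotone G := by
    intro x y hxy
    exact lam.colLen_anti _ _ (by
      have := lam.rowLen_anti (x + k) (y + k) (by omega)
      omega)
  obtain ⟨x, hx⟩ := aux_fixed_point G hmono s (fun x => aux_colLen_le_card lam _)
  refine ⟨(x + 1, lam.rowLen (x + k) + 1), ?_, ?_⟩
  · refine ⟨by omega, by omega, ?_⟩
    rw [hP (x + 1) (lam.rowLen (x + k) + 1) (by omega) (by omega)]
    simp only [Nat.add_sub_cancel]
    exact ⟨hx, trivial⟩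
  · rintro ⟨i, j⟩ ⟨hi, hj, hrest⟩
    rw [hP i j hi hj] at hrest
    obtain ⟨hc, hr⟩ := hrest
    -- show that i - 1 = x; then j - 1 = rowLen (x+k)
    set x' := i - 1 with hx'
    set y' := j - 1 with hy'
    -- both x and x' are "solutions"; show x' = x
    have hxQ1 : lam.colLen (lam.rowLen (x + k) + b) = x := hx
    have hxQ2 : lam.colLen (lam.rowLen (x' + k) + b) = x' := by
      rw [hr]; exact hc
    have key : ∀ u v : ℕ, lam.colLen (lam.rowLen (u + k) + b) = u →
        lam.colLen (lam.rowLen (v + k) + b) = v → u < v → False := by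
      intro u v hu hv huv
      rcases Nat.eq_zero_or_pos (lam.rowLen (u + k)) with h0 | hpos
      · -- then rowLen (v+k) = 0 too, so u = v
        have h1 : lam.rowLen (v + k) = 0 :=
          Nat.le_zero.mp (h0 ▸ lam.rowLen_anti (u + k) (v + k) (by omega))
        rw [h0] at hu; rw [h1] at hv; omega
      · -- counting argument
        set q := lam.rowLen (v + k) with hq
        -- rows 0..v-1 have length ≥ q + b + 1
        have hrows : ∀ c : ℕ × ℕ, c ∈ Finset.range v ×ˢ Finset.range (q + b + 1) →
            c ∈ lam.cells := by
          rintro ⟨u1, v1⟩ hmem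
          simp only [Finset.mem_product, Finset.mem_range] at hmem
          have hcell : (v - 1, q + b) ∈ lam :=
            YoungDiagram.mem_iff_lt_colLen.mpr (by omega)
          exact lam.up_left_mem (by omega) (by omega) hcell
        have hcol : ∀ c : ℕ × ℕ, c ∈ Finset.Ico v (u + k + 1) ×ˢ ({0} : Finset ℕ) →
            c ∈ lam.cells := by
          rintro ⟨u1, v1⟩ hmem
          simp only [Finset.mem_product, Finset.mem_Ico, Finset.mem_singleton] at hmem
          have hcell : (u + k, 0) ∈ lam := YoungDiagram.mem_iff_lt_rowLen.mpr (by omega)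
          exact lam.up_left_mem (by omega) (by omega) hcell
        have hdisj : Disjoint (Finset.range v ×ˢ Finset.range (q + b + 1))
            (Finset.Ico v (u + k + 1) ×ˢ ({0} : Finset ℕ)) := by
          rw [Finset.disjoint_left]
          rintro ⟨u1, v1⟩ h1 h2
          simp only [Finset.mem_product, Finset.mem_range, Finset.mem_Ico,
            Finset.mem_singleton] at h1 h2
          omega
        have hsub : (Finset.range v ×ˢ Finset.range (q + b + 1)) ∪
            (Finset.Ico v (u + k + 1) ×ˢ ({0} : Finset ℕ)) ⊆ lam.cells := by
          intro c hcmem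
          rcases Finset.mem_union.mp hcmem with h | h
          · exact hrows c h
          · exact hcol c h
        have hcard := Finset.card_le_card hsub
        rw [Finset.card_union_of_disjoint hdisj] at hcard
        simp only [Finset.card_product, Finset.card_range, Nat.card_Ico,
          Finset.card_singleton, mul_one] at hcard
        -- hcard : v * (q + b + 1) + (u + k + 1 - v) ≤ lam.card = s
        have hprod1 : v * (b + 1) ≤ v * (q + b + 1) := Nat.mul_le_mul_left v (by omega)
        have hprod2 : 1 * (b + 1) ≤ v * (b + 1) := Nat.mul_le_mul_right (b + 1) (by omega)
        have hvb : v * (b + 1) = v * b + v := by ring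
        have hvb2 : b ≤ v * b := Nat.le_mul_of_pos_left b (by omega)
        have hcards : lam.cells.card = lam.card := rfl
        omega
      -- end key
    have hxx' : x' = x := by
      rcases lt_trichotomy x' x with h | h | h
      · exact absurd (key x' x hxQ2 hxQ1 h) (by simp)
      · exact h
      · exact absurd (key x x' hxQ1 hxQ2 h) (by simp)
    have : j - 1 = lam.rowLen (x + k) := by rw [← hxx']; exact hr.symm
    have hij : i = x + 1 ∧ j = lam.rowLen (x + k) + 1 := by omega
    simp [Prod.ext_iff, hij.1, hij.2]
end

section
/- Let λ be a Young diagram with |λ| = s, and let n, l be integers with n > 2s and 0 ≤ l ≤ n − s − 1. If positive integers (i, j) satisfy λ_i + 1 ≤ j − 1 + n − s − l, (i ≥ 2 → j − 1 + n − s − l ≤ λ_{i−1}), λ'_j + 1 ≤ i + l, and (j ≥ 2 → i + l ≤ λ'_{j−1}), then i = 1 or j = 1. -/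
lemma rowLen_add_colLen_le (mu : YoungDiagram) (a b : ℕ) :
    mu.rowLen a + mu.colLen b ≤ mu.card + 1 := by
  have hsub : mu.row a ∪ mu.col b ⊆ mu.cells := by
    intro c hc
    rcases Finset.mem_union.mp hc with h | h
    · exact (YoungDiagram.mem_row_iff.mp h).1
    · exact (YoungDiagram.mem_col_iff.mp h).1
  have hinter : (mu.row a ∩ mu.col b).card ≤ 1 := by
    apply Finset.card_le_one.mpr
    intro c hc d hd
    simp only [Finset.mem_inter, YoungDiagram.mem_row_iff, YoungDiagram.mem_col_iff] at hc hd
    exact Prod.ext (hc.1.2.trans hd.1.2.symm) (hc.2.2.trans hd.2.2.symm)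
  have := Finset.card_union_add_card_inter (mu.row a) (mu.col b)
  have hle := Finset.card_le_card hsub
  have hcard : mu.card = mu.cells.card := rfl
  rw [mu.rowLen_eq_card, mu.colLen_eq_card]
  omega

/-- Let λ be a Young diagram with |λ| = s, and n, l integers with n > 2s,
0 ≤ l ≤ n − s − 1. If positive integers (i, j) (1-based) satisfy
λ_i + 1 ≤ j − 1 + n − s − l, (i ≥ 2 → j − 1 + n − s − l ≤ λ_{i−1}),
λ'_j + 1 ≤ i + l, and (j ≥ 2 → i + l ≤ λ'_{j−1}), then i = 1 or j = 1. -/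
theorem stmt4 (lam : YoungDiagram) (n l : ℤ)
    (hn2 : 2 * (lam.card : ℤ) < n)
    (hl0 : 0 ≤ l) (hl : l ≤ n - (lam.card : ℤ) - 1)
    (i j : ℕ) (hi : 1 ≤ i) (hj : 1 ≤ j)
    (h1 : (lam.rowLen (i - 1) : ℤ) + 1 ≤ (j : ℤ) - 1 + n - (lam.card : ℤ) - l)
    (h2 : 2 ≤ i → (j : ℤ) - 1 + n - (lam.card : ℤ) - l ≤ (lam.rowLen (i - 2) : ℤ))
    (h3 : (lam.colLen (j - 1) : ℤ) + 1 ≤ (i : ℤ) + l)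
    (h4 : 2 ≤ j → (i : ℤ) + l ≤ (lam.colLen (j - 2) : ℤ)) :
    i = 1 ∨ j = 1 := by
  by_contra h
  push_neg at h
  have hi2 : 2 ≤ i := by omega
  have hj2 : 2 ≤ j := by omega
  have key := rowLen_add_colLen_le lam (i - 2) (j - 2)
  have h2' := h2 hi2
  have h4' := h4 hj2
  have : (lam.rowLen (i-2) : ℤ) + (lam.colLen (j-2) : ℤ) ≤ (lam.card : ℤ) + 1 := by
    exact_mod_cast key
  omega
end

section
/- Let τ be a Young diagram, and let j, l, k be integers with j ≥ 1, l ≥ 1, 1 ≤ k ≤ j. Suppose μ is a Young diagram whose column lengths are: μ'_i = τ'_i for i < k, μ'_k = τ'_j + l, μ'_i = τ'_{i−1} + 1 for k < i ≤ j, and μ'_i = τ'_i for i > j. Then |μ| − |τ| = j − k + l > 0, and f(μ) − f(τ) = (|τ| − 1 + j − τ'_j)·(|μ| − |τ|). -/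
/-- `f(μ) = (|μ|² − |μ|)/2 + ct(μ)`. -/
def fY (μ : YoungDiagram) : ℚ :=
  (((μ.card : ℚ)) ^ 2 - (μ.card : ℚ)) / 2 + (ct μ : ℚ)

lemma sum_range_id_int (n : ℕ) : (∑ i ∈ Finset.range n, (i : ℤ)) * 2 = n * (n - 1) := by
  induction n with
  | zero => simp
  | succ m ih =>
      rw [Finset.sum_range_succ]
      push_cast
      push_cast at ih
      nlinarith [ih]

lemma colLen_zero_of_card_le (μ : YoungDiagram) (n : ℕ) (h : μ.card ≤ n) :
    μ.colLen n = 0 := by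
  by_contra h0
  have hpos : 0 < μ.colLen n := Nat.pos_of_ne_zero h0
  have hmem : (0, n) ∈ μ := YoungDiagram.mem_iff_lt_colLen.2 hpos
  have hall : ∀ i ≤ n, (0, i) ∈ μ.cells := fun i hi =>
    (YoungDiagram.mem_cells _).2 (μ.up_left_mem le_rfl hi hmem)
  have hsub : (Finset.range (n + 1)).image (fun i => ((0 : ℕ), i)) ⊆ μ.cells := by
    intro x hx
    simp only [Finset.mem_image, Finset.mem_range] at hx
    obtain ⟨i, hi, rfl⟩ := hx
    exact hall i (Nat.lt_succ_iff.1 hi)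
  have hcard := Finset.card_le_card hsub
  rw [Finset.card_image_of_injective _ (fun x y hxy => by simpa using hxy),
    Finset.card_range] at hcard
  have h' : μ.cells.card ≤ n := h
  omega

lemma cells_maps_to {μ : YoungDiagram} {N : ℕ} (hN : μ.colLen N = 0) :
    ∀ x ∈ μ.cells, x.2 ∈ Finset.range N := by
  intro x hx
  rw [Finset.mem_range]
  by_contra h
  push_neg at h
  have h1 : μ.colLen x.2 ≤ μ.colLen N := μ.colLen_anti N x.2 h
  have h2 : x.1 < μ.colLen x.2 := by
    rw [← YoungDiagram.mem_iff_lt_colLen, Prod.mk.eta]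
    exact (YoungDiagram.mem_cells _).1 hx
  omega

lemma fiber_eq_col (μ : YoungDiagram) (c : ℕ) :
    μ.cells.filter (fun x => x.2 = c) = Finset.range (μ.colLen c) ×ˢ {c} := by
  rw [← YoungDiagram.col_eq_prod]; rfl

lemma card_eq_sum_colLen (μ : YoungDiagram) (N : ℕ) (hN : μ.colLen N = 0) :
    (μ.card : ℤ) = ∑ c ∈ Finset.range N, (μ.colLen c : ℤ) := by
  have h := Finset.card_eq_sum_card_fiberwise (cells_maps_to hN)
  have h2 : μ.card = ∑ c ∈ Finset.range N, μ.colLen c := by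
    rw [YoungDiagram.card, h]
    refine Finset.sum_congr rfl fun c _ => ?_
    rw [fiber_eq_col]
    simp
  rw [h2]
  push_cast
  rfl

lemma two_ct_eq (μ : YoungDiagram) (N : ℕ) (hN : μ.colLen N = 0) :
    2 * ct μ = ∑ c ∈ Finset.range N,
      (2 * (c : ℤ) * (μ.colLen c : ℤ) - (μ.colLen c : ℤ) * ((μ.colLen c : ℤ) - 1)) := by
  rw [ct, ← Finset.sum_fiberwise_of_maps_to (cells_maps_to hN)
    (fun x => ((x.2 : ℤ) - (x.1 : ℤ))), Finset.mul_sum]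
  refine Finset.sum_congr rfl fun c _ => ?_
  rw [fiber_eq_col, Finset.sum_product]
  simp only [Finset.sum_singleton]
  have hg := sum_range_id_int (μ.colLen c)
  rw [Finset.mul_sum]
  rw [Finset.sum_congr rfl (fun i _ => by ring :
    ∀ i ∈ Finset.range (μ.colLen c), 2 * ((c : ℤ) - (i : ℤ)) = 2 * (c:ℤ) - 2 * (i:ℤ)),
    Finset.sum_sub_distrib, Finset.sum_const, Finset.card_range, ← Finset.mul_sum]
  simp only [nsmul_eq_mul]
  linarith [hg]

/-- Let τ be a Young diagram, j, l, k integers with j ≥ 1, l ≥ 1, 1 ≤ k ≤ j.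
If μ is a Young diagram whose 1-based column lengths are μ'_i = τ'_i for i < k,
μ'_k = τ'_j + l, μ'_i = τ'_{i−1} + 1 for k < i ≤ j, and μ'_i = τ'_i for i > j,
then |μ| − |τ| = j − k + l > 0 and
f(μ) − f(τ) = (|τ| − 1 + j − τ'_j)·(|μ| − |τ|).
(Here `colLen (i-1)` is the 1-based column length μ'_i.) -/
theorem stmt5 (τ μ : YoungDiagram) (j l k : ℕ)
    (hj : 1 ≤ j) (hl : 1 ≤ l) (hk1 : 1 ≤ k) (hkj : k ≤ j)
    (h1 : ∀ i, 1 ≤ i → i < k → μ.colLen (i - 1) = τ.colLen (i - 1))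
    (h2 : μ.colLen (k - 1) = τ.colLen (j - 1) + l)
    (h3 : ∀ i, k < i → i ≤ j → μ.colLen (i - 1) = τ.colLen (i - 2) + 1)
    (h4 : ∀ i, j < i → μ.colLen (i - 1) = τ.colLen (i - 1)) :
    ((μ.card : ℤ) - (τ.card : ℤ) = (j : ℤ) - k + l ∧ 0 < (j : ℤ) - k + l) ∧
      fY μ - fY τ =
        ((τ.card : ℚ) - 1 + (j : ℚ) - (τ.colLen (j - 1) : ℚ)) *
          ((μ.card : ℚ) - (τ.card : ℚ)) := by
  set a := k - 1 with ha_def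
  set b := j - 1 with hb_def
  have hka : k = a + 1 := by omega
  have hjb : j = b + 1 := by omega
  have hab : a ≤ b := by omega
  set m : ℕ → ℤ := fun c => (μ.colLen c : ℤ) with hm_def
  set t : ℕ → ℤ := fun c => (τ.colLen c : ℤ) with ht_def
  have hA : ∀ c, c < a → m c = t c := by
    intro c hc
    have := h1 (c + 1) (by omega) (by omega)
    simp only [Nat.add_sub_cancel] at this
    simp [hm_def, ht_def, this]
  have hB : m a = t b + l := by
    have := h2
    simp [hm_def, ht_def, this]
  have hC : ∀ c, a < c → c ≤ b → m c = t (c - 1) + 1 := by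
    intro c hc1 hc2
    have := h3 (c + 1) (by omega) (by omega)
    have he : c + 1 - 1 = c := by omega
    have he2 : c + 1 - 2 = c - 1 := by omega
    rw [he, he2] at this
    simp [hm_def, ht_def, this]
  have hD : ∀ c, b < c → m c = t c := by
    intro c hc
    have := h4 (c + 1) (by omega)
    simp only [Nat.add_sub_cancel] at this
    simp [hm_def, ht_def, this]
  set N := μ.card + τ.card + j + 1 with hN_def
  have hNμ : μ.colLen N = 0 := colLen_zero_of_card_le μ N (by omega)
  have hNτ : τ.colLen N = 0 := colLen_zero_of_card_le τ N (by omega)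
  have hcardμ : (μ.card : ℤ) = ∑ c ∈ Finset.range N, m c := card_eq_sum_colLen μ N hNμ
  have hcardτ : (τ.card : ℤ) = ∑ c ∈ Finset.range N, t c := card_eq_sum_colLen τ N hNτ
  have hctμ : 2 * ct μ = ∑ c ∈ Finset.range N, (2 * (c : ℤ) * m c - m c * (m c - 1)) :=
    two_ct_eq μ N hNμ
  have hctτ : 2 * ct τ = ∑ c ∈ Finset.range N, (2 * (c : ℤ) * t c - t c * (t c - 1)) :=
    two_ct_eq τ N hNτ
  -- key generic telescoping lemma
  have key : ∀ F : ℕ → ℤ → ℤ,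
      (∑ c ∈ Finset.range N, F c (m c)) - (∑ c ∈ Finset.range N, F c (t c)) =
        F a (t b + l) - F b (t b) +
        ∑ i ∈ Finset.range (b - a), (F (a + 1 + i) (t (a + i) + 1) - F (a + i) (t (a + i))) := by
    intro F
    rw [← Finset.sum_sub_distrib]
    have hsub : Finset.Ico a (b + 1) ⊆ Finset.range N := by
      intro c hc
      simp only [Finset.mem_Ico] at hc
      simp only [Finset.mem_range]
      omega
    have hzero : ∀ c ∈ Finset.range N, c ∉ Finset.Ico a (b + 1) →
        F c (m c) - F c (t c) = 0 := by
      intro c _ hc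
      simp only [Finset.mem_Ico, not_and_or, not_le, not_lt] at hc
      rcases hc with hc | hc
      · rw [hA c hc]; ring
      · rw [hD c (by omega)]; ring
    rw [← Finset.sum_subset hsub hzero]
    rw [Finset.sum_sub_distrib]
    rw [Finset.sum_eq_sum_Ico_succ_bot (Nat.lt_succ_of_le hab) (fun c => F c (m c))]
    rw [Finset.sum_Ico_succ_top hab (fun c => F c (t c))]
    rw [hB]
    have hmid : ∑ c ∈ Finset.Ico (a + 1) (b + 1), F c (m c)
        = ∑ i ∈ Finset.range (b - a), F (a + 1 + i) (t (a + i) + 1) := by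
      rw [Finset.sum_Ico_eq_sum_range]
      have hlen : b + 1 - (a + 1) = b - a := by omega
      rw [hlen]
      refine Finset.sum_congr rfl fun i hi => ?_
      simp only [Finset.mem_range] at hi
      rw [hC (a + 1 + i) (by omega) (by omega), show a + 1 + i - 1 = a + i from by omega]
    rw [hmid]
    have hmid2 : ∑ c ∈ Finset.Ico a b, F c (t c)
        = ∑ i ∈ Finset.range (b - a), F (a + i) (t (a + i)) := by
      rw [Finset.sum_Ico_eq_sum_range]
    rw [hmid2, Finset.sum_sub_distrib]
    ring
  -- card difference
  have E1 : (μ.card : ℤ) - (τ.card : ℤ) = (j : ℤ) - k + l := by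
    rw [hcardμ, hcardτ, key (fun _ x => x)]
    simp only [add_sub_cancel_left, Finset.sum_const, Finset.card_range, nsmul_eq_mul, mul_one]
    omega
  -- content difference
  have E2 : 2 * ct μ - 2 * ct τ =
      2 * (a : ℤ) * (t b + l) - (t b + l) * ((t b + l) - 1)
        - (2 * (b : ℤ) * t b - t b * (t b - 1))
        + (((b : ℤ) - a) * (2 * a + 2) + ((b : ℤ) - a) * (((b : ℤ) - a) - 1)) := by
    rw [hctμ, hctτ, key (fun c x => 2 * (c : ℤ) * x - x * (x - 1))]
    have hterm : ∀ i ∈ Finset.range (b - a),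
        (2 * ((a + 1 + i : ℕ) : ℤ) * (t (a + i) + 1) - (t (a + i) + 1) * ((t (a + i) + 1) - 1))
          - (2 * ((a + i : ℕ) : ℤ) * (t (a + i)) - t (a + i) * (t (a + i) - 1))
        = 2 * ((a : ℤ) + 1) + 2 * (i : ℤ) := by
      intro i _
      push_cast
      ring
    rw [Finset.sum_congr rfl hterm, Finset.sum_add_distrib, Finset.sum_const,
      Finset.card_range, ← Finset.mul_sum]
    simp only [nsmul_eq_mul]
    have hg := sum_range_id_int (b - a)
    have hba : ((b - a : ℕ) : ℤ) = (b : ℤ) - a := by omega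
    rw [hba] at hg ⊢
    linear_combination hg
  -- assemble
  have hpos : (0 : ℤ) < (j : ℤ) - k + l := by
    have : (k : ℤ) ≤ (j : ℤ) := by exact_mod_cast hkj
    have : (1 : ℤ) ≤ (l : ℤ) := by exact_mod_cast hl
    omega
  refine ⟨⟨E1, hpos⟩, ?_⟩
  have hCμ : (μ.card : ℤ) = (τ.card : ℤ) + ((j : ℤ) - k + l) := by linarith
  have hjz : (j : ℤ) = (b : ℤ) + 1 := by omega
  have hkz : (k : ℤ) = (a : ℤ) + 1 := by omega
  have EZ : (μ.card : ℤ) ^ 2 - (μ.card : ℤ) + 2 * ct μ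
      - (((τ.card : ℤ)) ^ 2 - (τ.card : ℤ)) - 2 * ct τ
      = 2 * ((τ.card : ℤ) - 1 + (j : ℤ) - t b) * ((μ.card : ℤ) - (τ.card : ℤ)) := by
    rw [hCμ, hjz, hkz] at *
    linear_combination E2
  have EZQ : (μ.card : ℚ) ^ 2 - (μ.card : ℚ) + 2 * (ct μ : ℚ)
      - (((τ.card : ℚ)) ^ 2 - (τ.card : ℚ)) - 2 * (ct τ : ℚ)
      = 2 * ((τ.card : ℚ) - 1 + (j : ℚ) - ((τ.colLen (j - 1) : ℚ))) *
        ((μ.card : ℚ) - (τ.card : ℚ)) := by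
    have hb' : τ.colLen (j - 1) = τ.colLen b := by rw [← hb_def]
    rw [hb']
    exact_mod_cast EZ
  rw [fY, fY]
  linear_combination EZQ / 2
end

section
/- Let τ be a Young diagram, and let j, l, k be integers with j ≥ 1, l ≥ 1, 1 ≤ k ≤ j. Suppose μ is a Young diagram whose column lengths are: μ'_i = τ'_i for i < k, μ'_k = τ'_j + l, μ'_i = τ'_{i−1} + 1 for k < i ≤ j, and μ'_i = τ'_i for i > j. Then 2·(ct(μ) − ct(τ)) = −(2τ'_j + 1)·(j − k + l) + (j + k − l)·(j − k + l). -/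
open Finset

def g (L c : ℕ) : ℤ := (L : ℤ) * (2*c - L + 1)

lemma col_sum (L c : ℕ) : ∑ i ∈ Finset.range L, (2:ℤ) * ((c:ℤ) - i) = g L c := by
  induction L with
  | zero => simp [g]
  | succ n ih => rw [Finset.sum_range_succ, ih]; simp only [g]; push_cast; ring

lemma zeroCol (μ : YoungDiagram) (c : ℕ) (h : μ.rowLen 0 ≤ c) : μ.colLen c = 0 := by
  by_contra h'
  have h2 : (0, c) ∈ μ := by rw [YoungDiagram.mem_iff_lt_colLen]; omega
  rw [YoungDiagram.mem_iff_lt_rowLen] at h2; omega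

lemma cells_eq (μ : YoungDiagram) (N : ℕ) (hN : ∀ c, N ≤ c → μ.colLen c = 0) :
    μ.cells = (Finset.range N).biUnion
      (fun c => (Finset.range (μ.colLen c)).image (fun i => (i, c))) := by
  ext ⟨i, c⟩
  simp only [Finset.mem_biUnion, Finset.mem_range, Finset.mem_image, YoungDiagram.mem_cells]
  constructor
  · intro h
    rw [YoungDiagram.mem_iff_lt_colLen] at h
    refine ⟨c, ?_, i, h, rfl⟩
    by_contra hc
    have := hN c (by omega)
    omega
  · rintro ⟨c', _, i', hi', h⟩
    cases h
    rw [YoungDiagram.mem_iff_lt_colLen]; exact hi'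

lemma two_ct (μ : YoungDiagram) (N : ℕ) (hN : ∀ c, N ≤ c → μ.colLen c = 0) :
    2 * ct μ = ∑ c ∈ Finset.range N, g (μ.colLen c) c := by
  rw [ct, Finset.mul_sum, cells_eq μ N hN, Finset.sum_biUnion]
  · refine Finset.sum_congr rfl fun c _ => ?_
    rw [Finset.sum_image (by intro a _ b _ h; simpa using h)]
    simpa using col_sum (μ.colLen c) c
  · intro a _ b _ hab
    simp only [Finset.disjoint_left, Finset.mem_image, Finset.mem_range]
    rintro ⟨x, y⟩ ⟨i, _, h⟩ ⟨i', _, h'⟩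
    apply hab
    cases h; cases h'; rfl

lemma gstep (a c : ℕ) : g (a+1) (c+1) - g a c = 2*(c:ℤ)+2 := by
  simp only [g]; push_cast; ring

lemma tel (K : ℕ) : ∀ M, K ≤ M →
    ∑ c ∈ Finset.Ico K M, ((2:ℤ)*c+2) = ((M:ℤ)+K+1)*((M:ℤ)-K) := by
  refine Nat.le_induction ?_ ?_
  · simp
  · intro M hM ih
    rw [Finset.sum_Ico_succ_top hM, ih]
    push_cast; ring

/-- Let τ be a Young diagram, j, l, k integers with j ≥ 1, l ≥ 1, 1 ≤ k ≤ j.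
If μ is a Young diagram whose 1-based column lengths are μ'_i = τ'_i for i < k,
μ'_k = τ'_j + l, μ'_i = τ'_{i−1} + 1 for k < i ≤ j, and μ'_i = τ'_i for i > j,
then 2·(ct(μ) − ct(τ)) = −(2τ'_j + 1)·(j − k + l) + (j + k − l)·(j − k + l). -/
theorem stmt6 (τ μ : YoungDiagram) (j l k : ℕ)
    (hj : 1 ≤ j) (hl : 1 ≤ l) (hk1 : 1 ≤ k) (hkj : k ≤ j)
    (h1 : ∀ i, 1 ≤ i → i < k → μ.colLen (i - 1) = τ.colLen (i - 1))
    (h2 : μ.colLen (k - 1) = τ.colLen (j - 1) + l)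
    (h3 : ∀ i, k < i → i ≤ j → μ.colLen (i - 1) = τ.colLen (i - 2) + 1)
    (h4 : ∀ i, j < i → μ.colLen (i - 1) = τ.colLen (i - 1)) :
    2 * (ct μ - ct τ) =
      -(2 * (τ.colLen (j - 1) : ℤ) + 1) * ((j : ℤ) - k + l) +
        ((j : ℤ) + k - l) * ((j : ℤ) - k + l) := by
  obtain ⟨J, rfl⟩ : ∃ J, j = J + 1 := ⟨j - 1, by omega⟩
  obtain ⟨K, rfl⟩ : ∃ K, k = K + 1 := ⟨k - 1, by omega⟩
  have hKJ : K ≤ J := by omega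
  simp only [Nat.add_sub_cancel] at h2 ⊢
  set N := J + 1 + μ.rowLen 0 + τ.rowLen 0 with hN
  have hNμ : ∀ c, N ≤ c → μ.colLen c = 0 := fun c hc => zeroCol μ c (by omega)
  have hNτ : ∀ c, N ≤ c → τ.colLen c = 0 := fun c hc => zeroCol τ c (by omega)
  have key : 2 * (ct μ - ct τ) =
      ∑ c ∈ Finset.Ico K (J+1), (g (μ.colLen c) c - g (τ.colLen c) c) := by
    rw [mul_sub, two_ct μ N hNμ, two_ct τ N hNτ, ← Finset.sum_sub_distrib]
    refine (Finset.sum_subset ?_ ?_).symm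
    · intro x hx; simp only [Finset.mem_Ico] at hx; simp only [Finset.mem_range]; omega
    · intro x hx hnx
      simp only [Finset.mem_range] at hx
      simp only [Finset.mem_Ico, not_and, not_lt] at hnx
      rcases (by omega : x < K ∨ J + 1 ≤ x) with h | h
      · have e := h1 (x+1) (by omega) (by omega)
        simp only [Nat.add_sub_cancel] at e
        rw [e]; ring
      · have e := h4 (x+1) (by omega)
        simp only [Nat.add_sub_cancel] at e
        rw [e]; ring
  have h3' : ∀ c, K ≤ c → c < J → μ.colLen (c+1) = τ.colLen c + 1 := by
    intro c hc hc'
    have := h3 (c+2) (by omega) (by omega)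
    simpa using this
  rw [key, Finset.sum_sub_distrib,
    Finset.sum_eq_sum_Ico_succ_bot (by omega : K < J + 1) (fun c => g (μ.colLen c) c),
    Finset.sum_Ico_succ_top hKJ (fun c => g (τ.colLen c) c)]
  have shift : ∑ c ∈ Finset.Ico (K+1) (J+1), g (μ.colLen c) c
      = ∑ c ∈ Finset.Ico K J, g (μ.colLen (c+1)) (c+1) := by
    rw [← Finset.sum_Ico_add (fun c => g (μ.colLen c) c) K J 1]
    exact Finset.sum_congr rfl fun c _ => by rw [Nat.add_comm 1 c]
  rw [shift, h2]
  have inner : ∑ c ∈ Finset.Ico K J, g (μ.colLen (c+1)) (c+1)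
      - ∑ c ∈ Finset.Ico K J, g (τ.colLen c) c = ((J:ℤ)+K+1)*((J:ℤ)-K) := by
    rw [← Finset.sum_sub_distrib, ← tel K J hKJ]
    refine Finset.sum_congr rfl fun c hc => ?_
    simp only [Finset.mem_Ico] at hc
    rw [h3' c hc.1 hc.2, gstep]
  have expand : g (τ.colLen J + l) K + ∑ c ∈ Finset.Ico K J, g (μ.colLen (c+1)) (c+1)
      - (∑ c ∈ Finset.Ico K J, g (τ.colLen c) c + g (τ.colLen J) J)
      = g (τ.colLen J + l) K - g (τ.colLen J) J + ((J:ℤ)+K+1)*((J:ℤ)-K) := by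
    rw [← inner]; ring
  rw [expand]
  simp only [g]
  push_cast
  ring
end

section
/- Let c, ν be real numbers with c > 0, and let τ be a Young diagram. Then the set of Young diagrams μ satisfying (c/2)·|μ|² − (c/2)·|μ| − c·ν·|μ| − |μ|·|τ| + c·Σ_{k≥1} k·μ'_k − (c − 1)·Σ_{k≥1} k·μ_k − (3/2)·|τ|² − |τ|/2 + c·ν·|τ| − c·f(τ) ≤ 0 is finite. -/
/-- `Σ_{k≥1} k·μ_k`, each cell of μ in (1-based) row k contributing k. -/
def wr (μ : YoungDiagram) : ℕ := ∑ c ∈ μ.cells, (c.1 + 1)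

/-- `Σ_{k≥1} k·μ'_k`, each cell of μ in (1-based) column k contributing k. -/
def wc (μ : YoungDiagram) : ℕ := ∑ c ∈ μ.cells, (c.2 + 1)

/-!
Each column contributes nonnegatively to `Σ k·μ'_k`, and counting pairs of cells in a common
column, one weakly above the other, gives `2·Σ k·μ_k ≤ |μ|² + |μ|`. Hence the left-hand side is at
least `min(c, 1)/2·|μ|²` minus an affine function of `|μ|`, so `|μ|` is bounded on the set, and
there are only finitely many Young diagrams of bounded size.
-/

open Finset

theorem Finset.two_mul_card_filter_le_card_sq_add_card {α : Type*} [DecidableEq α]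
    (s : Finset α) (r : α → α → Prop) [DecidableRel r]
    (hr : ∀ x ∈ s, ∀ y ∈ s, r x y → r y x → x = y) :
    2 * #{p ∈ s ×ˢ s | r p.1 p.2} ≤ #s ^ 2 + #s := by
  set S := {p ∈ s ×ˢ s | r p.1 p.2}
  set S' := {p ∈ s ×ˢ s | r p.2 p.1}
  have hswap : #S = #S' := card_equiv (Equiv.prodComm α α) fun p => by
    simp [S, S', and_comm]
  have hunion : S ∪ S' ⊆ s ×ˢ s := by
    rw [filter_union_right]; exact filter_subset _ _
  have hinter : S ∩ S' ⊆ s.diag := by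
    intro p hp
    simp only [S, S', mem_inter, mem_filter, mem_product] at hp
    exact mem_diag.2 ⟨hp.1.1.1, hr _ hp.1.1.1 _ hp.1.1.2 hp.1.2 hp.2.2⟩
  calc 2 * #S = #(S ∪ S') + #(S ∩ S') := by rw [card_union_add_card_inter]; omega
    _ ≤ #(s ×ˢ s) + #s.diag := add_le_add (card_le_card hunion) (card_le_card hinter)
    _ = #s ^ 2 + #s := by rw [card_product, diag_card, sq]

namespace YoungDiagram

theorem colLen_le_card (μ : YoungDiagram) (j : ℕ) : μ.colLen j ≤ μ.card := by
  rw [colLen_eq_card]; exact card_le_card (filter_subset _ _)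

theorem rowLen_le_card (μ : YoungDiagram) (i : ℕ) : μ.rowLen i ≤ μ.card := by
  rw [rowLen_eq_card]; exact card_le_card (filter_subset _ _)

theorem cells_subset_range_card (μ : YoungDiagram) :
    μ.cells ⊆ range μ.card ×ˢ range μ.card := by
  rintro ⟨i, j⟩ h
  rw [mem_cells] at h
  exact mem_product.2 ⟨mem_range.2 ((mem_iff_lt_colLen.1 h).trans_le (μ.colLen_le_card j)),
    mem_range.2 ((mem_iff_lt_rowLen.1 h).trans_le (μ.rowLen_le_card i))⟩

theorem finite_setOf_card_mem {T : Set ℕ} (hT : T.Finite) :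
    {μ : YoungDiagram | μ.card ∈ T}.Finite := by
  obtain ⟨N, hN⟩ := hT.bddAbove
  have hbox : ((range N ×ˢ range N).powerset : Set (Finset (ℕ × ℕ))).Finite := finite_toSet _
  refine (hbox.preimage fun _ _ _ _ h => YoungDiagram.ext h).subset fun μ hμ => ?_
  have hcard : μ.card ≤ N := hN hμ
  exact mem_powerset.2 <| μ.cells_subset_range_card.trans <|
    product_subset_product (range_subset_range.2 hcard) (range_subset_range.2 hcard)

theorem filter_cells_above_eq (μ : YoungDiagram) {x : ℕ × ℕ} (hx : x ∈ μ) :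
    {y ∈ μ.cells | y.2 = x.2 ∧ y.1 ≤ x.1} = range (x.1 + 1) ×ˢ {x.2} := by
  ext ⟨i, j⟩
  simp only [mem_filter, mem_cells, mem_product, mem_range, mem_singleton, Nat.lt_succ_iff]
  constructor
  · exact fun ⟨_, hj, hi⟩ => ⟨hi, hj⟩
  · rintro ⟨hi, rfl⟩
    exact ⟨μ.up_left_mem hi le_rfl hx, rfl, hi⟩

end YoungDiagram

theorem wr_eq_card_filter (μ : YoungDiagram) :
    wr μ = #{p ∈ μ.cells ×ˢ μ.cells | p.2.2 = p.1.2 ∧ p.2.1 ≤ p.1.1} := by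
  rw [card_filter, sum_product, wr]
  refine sum_congr rfl fun x hx => ?_
  rw [← card_filter, μ.filter_cells_above_eq ((μ.mem_cells x).1 hx)]
  simp

theorem two_mul_wr_le (μ : YoungDiagram) : 2 * wr μ ≤ μ.card ^ 2 + μ.card := by
  rw [wr_eq_card_filter]
  refine two_mul_card_filter_le_card_sq_add_card μ.cells
    (fun x y : ℕ × ℕ => y.2 = x.2 ∧ y.1 ≤ x.1) ?_
  rintro x - y - ⟨hcol, hyx⟩ ⟨-, hxy⟩
  exact Prod.ext (le_antisymm hxy hyx) hcol.symm

theorem Nat.finite_setOf_mul_sq_le {a b c : ℝ} (ha : 0 < a) :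
    {n : ℕ | a * n ^ 2 ≤ b * n + c}.Finite := by
  refine (Set.finite_Iic ⌊(|b| + |c|) / a⌋₊).subset fun n hn => Nat.le_floor ?_
  rw [le_div_iff₀ ha]
  rcases n.eq_zero_or_pos with rfl | hpos
  · simp only [Nat.cast_zero, zero_mul]; positivity
  · have hn1 : (1 : ℝ) ≤ n := by exact_mod_cast hpos
    nlinarith [le_abs_self b, le_abs_self c, abs_nonneg c, Set.mem_ofPred_eq ▸ hn]

/-- For real c > 0 and ν, and a Young diagram τ, the set of Young diagrams μ with
(c/2)|μ|² − (c/2)|μ| − cν|μ| − |μ||τ| + c·Σk·μ'_k − (c−1)·Σk·μ_k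
− (3/2)|τ|² − |τ|/2 + cν|τ| − c·f(τ) ≤ 0 is finite. -/
theorem stmt8 (c ν : ℝ) (hc : 0 < c) (τ : YoungDiagram) :
    {μ : YoungDiagram |
      c / 2 * (μ.card : ℝ) ^ 2 - c / 2 * (μ.card : ℝ) - c * ν * (μ.card : ℝ)
        - (μ.card : ℝ) * (τ.card : ℝ) + c * (wc μ : ℝ) - (c - 1) * (wr μ : ℝ)
        - 3 / 2 * (τ.card : ℝ) ^ 2 - (τ.card : ℝ) / 2 + c * ν * (τ.card : ℝ)
        - c * (fY τ : ℝ) ≤ 0}.Finite := by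
  set p := max (c - 1) 0
  have hm : 0 < (c - p) / 2 := by
    have : p < c := max_lt (by linarith) hc
    linarith
  set t : ℝ := (τ.card : ℝ)
  refine (YoungDiagram.finite_setOf_card_mem (Nat.finite_setOf_mul_sq_le hm
    (b := c / 2 + c * ν + t + p / 2)
    (c := 3 / 2 * t ^ 2 + t / 2 - c * ν * t + c * fY τ))).subset fun μ hμ => ?_
  have hwr : (c - 1) * (wr μ : ℝ) ≤ p * ((μ.card ^ 2 + μ.card) / 2) := by
    refine mul_le_mul (le_max_left _ _) ?_ (by positivity) (le_max_right _ _)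
    rw [le_div_iff₀ two_pos, mul_comm]
    exact_mod_cast two_mul_wr_le μ
  have hwc : 0 ≤ c * (wc μ : ℝ) := by positivity
  simp only [Set.mem_ofPred_eq] at hμ ⊢
  linarith
end

section
/- Let τ be a Young diagram and let C, C' be real numbers with C ≠ 0. Then the set of Young diagrams μ for which there exists a positive integer m satisfying |μ| − |τ| = C·m, (|μ|² − |μ|)/2 + ct(μ) − f(τ) = C'·(|μ| − |τ|), and m ≥ Σ_{k≥1} k·μ_k − l(μ)·|τ| − (3/2)·|τ|² − |τ|/2, is finite. -/
lemma colLen_le_card (μ : YoungDiagram) (j : ℕ) : μ.colLen j ≤ μ.card := by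
  rw [YoungDiagram.colLen_eq_card]
  exact Finset.card_filter_le _ _

lemma rowLen_le_card (μ : YoungDiagram) (i : ℕ) : μ.rowLen i ≤ μ.card := by
  rw [YoungDiagram.rowLen_eq_card]
  exact Finset.card_filter_le _ _

lemma wr_add_ct_nonneg (μ : YoungDiagram) : 0 ≤ (wr μ : ℤ) + ct μ := by
  rw [wr, ct]
  push_cast
  rw [← Finset.sum_add_distrib]
  apply Finset.sum_nonneg
  intro c _
  omega

lemma finite_card_le (N : ℕ) : {μ : YoungDiagram | μ.card ≤ N}.Finite := by
  have hinj : Set.InjOn (fun μ : YoungDiagram => μ.cells)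
      {μ : YoungDiagram | μ.card ≤ N} := by
    intro a _ b _ h
    exact YoungDiagram.ext h
  apply Set.Finite.of_finite_image _ hinj
  apply Set.Finite.subset ((Finset.range N ×ˢ Finset.range N).powerset : Finset _).finite_toSet
  rintro s ⟨μ, hμ, rfl⟩
  simp only [Finset.coe_powerset, Set.mem_preimage, Set.mem_powerset_iff]
  intro c hc
  simp only [Finset.coe_product, Set.mem_prod, Finset.mem_coe, Finset.mem_range]
  obtain ⟨i, j⟩ := c
  have h1 : i < μ.colLen j := YoungDiagram.mem_iff_lt_colLen.mp hc
  have h2 : j < μ.rowLen i := YoungDiagram.mem_iff_lt_rowLen.mp hc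
  exact ⟨lt_of_lt_of_le h1 ((colLen_le_card μ j).trans hμ),
         lt_of_lt_of_le h2 ((rowLen_le_card μ i).trans hμ)⟩

set_option maxHeartbeats 1600000 in
/-- Let τ be a Young diagram and C, C' real with C ≠ 0. The set of Young
diagrams μ for which there exists a positive integer m with |μ| − |τ| = C·m,
(|μ|² − |μ|)/2 + ct(μ) − f(τ) = C'·(|μ| − |τ|), and
m ≥ Σ_{k≥1} k·μ_k − l(μ)·|τ| − (3/2)|τ|² − |τ|/2, is finite.
(Here `μ.colLen 0` is the number of nonempty rows l(μ).) -/
theorem stmt9 (τ : YoungDiagram) (C C' : ℝ) (hC : C ≠ 0) :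
    {μ : YoungDiagram | ∃ m : ℕ, 0 < m ∧
      (μ.card : ℝ) - (τ.card : ℝ) = C * m ∧
      ((μ.card : ℝ) ^ 2 - (μ.card : ℝ)) / 2 + (ct μ : ℝ) - (fY τ : ℝ)
        = C' * ((μ.card : ℝ) - (τ.card : ℝ)) ∧
      (m : ℝ) ≥ (wr μ : ℝ) - (μ.colLen 0 : ℝ) * (τ.card : ℝ)
        - 3 / 2 * (τ.card : ℝ) ^ 2 - (τ.card : ℝ) / 2}.Finite := by
  have hD : (0:ℝ) < |C| := abs_pos.mpr hC
  set t : ℝ := (τ.card : ℝ) with ht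
  set F : ℝ := (fY τ : ℝ) with hF
  set e : ℝ := |C|⁻¹ with he
  have he0 : 0 < e := by positivity
  set A : ℝ := |C'| with hA
  set B : ℝ := |F| with hB
  set bd : ℝ := 2 + 2 * e + 2 * A + 2 * t + 2 * t * e + 2 * B + 2 * A * t + 3 * t ^ 2 + t
    with hbd
  apply (finite_card_le ⌈bd⌉₊).subset
  rintro μ ⟨m, hm0, h1, h2, h3⟩
  show μ.card ≤ ⌈bd⌉₊
  set n : ℝ := (μ.card : ℝ) with hn
  have hn0 : (0:ℝ) ≤ n := by positivity
  have ht0 : (0:ℝ) ≤ t := by positivity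
  have hA0 : (0:ℝ) ≤ A := abs_nonneg _
  have hB0 : (0:ℝ) ≤ B := abs_nonneg _
  have hm1 : (1:ℝ) ≤ (m:ℝ) := by exact_mod_cast hm0
  have hwc : (0:ℝ) ≤ (wr μ : ℝ) + (ct μ : ℝ) := by exact_mod_cast wr_add_ct_nonneg μ
  have hl : ((μ.colLen 0 : ℝ)) ≤ n := by rw [hn]; exact_mod_cast colLen_le_card μ 0
  have hlt : ((μ.colLen 0 : ℝ)) * t ≤ n * t := mul_le_mul_of_nonneg_right hl ht0
  have habs : |n - t| ≤ n + t := abs_le.mpr ⟨by linarith, by linarith⟩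
  have hC'bd : C' * (n - t) ≤ A * (n + t) := by
    refine le_trans (le_abs_self _) ?_
    rw [abs_mul]
    exact mul_le_mul_of_nonneg_left habs (abs_nonneg _)
  have hDm : |C| * (m:ℝ) ≤ n + t := by
    have h : |C| * (m:ℝ) = |C * m| := by rw [abs_mul, Nat.abs_cast]
    rw [h, ← h1]; exact habs
  have hm' : (m:ℝ) ≤ e * (n + t) := by
    have h := mul_le_mul_of_nonneg_left hDm he0.le
    rw [← mul_assoc, he, inv_mul_cancel₀ hD.ne', one_mul] at h
    rw [he]; exact h
  have hFle : F ≤ B := le_abs_self F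
  have hq : n * n ≤ n + 2 * e * n + 2 * e * t + 2 * B + 2 * A * n + 2 * A * t
      + 2 * n * t + 3 * t ^ 2 + t := by
    nlinarith [h2, h3, hwc, hlt, hC'bd, hm', hFle]
  have hfin : n ≤ bd := by
    by_contra hcon
    push_neg at hcon
    have hbd2 : (2:ℝ) ≤ bd := by
      have q4 : (0:ℝ) ≤ 2 * t * e := mul_nonneg (mul_nonneg (by norm_num) ht0) he0.le
      have q6 : (0:ℝ) ≤ 2 * A * t := mul_nonneg (mul_nonneg (by norm_num) hA0) ht0
      have q7 : (0:ℝ) ≤ 3 * t ^ 2 := mul_nonneg (by norm_num) (sq_nonneg t)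
      rw [hbd]; linarith
    have hn1 : (1:ℝ) ≤ n := by linarith
    have hnpos : (0:ℝ) < n := by linarith
    have h5 : bd * n < n * n := mul_lt_mul_of_pos_right hcon hnpos
    have h6 : bd * n = 2 * n + 2 * e * n + 2 * A * n + 2 * t * n + 2 * t * e * n
        + 2 * B * n + 2 * A * t * n + 3 * t ^ 2 * n + t * n := by rw [hbd]; ring
    rw [h6] at h5
    have e1 : 2 * e * t ≤ 2 * t * e * n := by nlinarith [mul_nonneg he0.le ht0]
    have e2 : 2 * B ≤ 2 * B * n := by nlinarith
    have e3 : 2 * A * t ≤ 2 * A * t * n := by nlinarith [mul_nonneg hA0 ht0]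
    have e4 : 3 * t ^ 2 ≤ 3 * t ^ 2 * n := by nlinarith [sq_nonneg t]
    have e5 : t ≤ t * n := by nlinarith
    have e6 : 2 * n * t = 2 * t * n := by ring
    linarith
  have hcast : n ≤ (⌈bd⌉₊ : ℝ) := hfin.trans (Nat.le_ceil bd)
  rw [hn] at hcast
  exact_mod_cast hcast
end

section
/- Let a, m be integers with a ≥ 1 and m ≥ 1, and let b be an integer. If there exists an integer N such that gcd(a·n − b, m) ≥ a for every integer n ≥ N, then a divides b and a divides m. -/
/-!
Let `g = gcd(a, m)`. Modulo `m`, the numbers `a n - b` run through the whole class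
`-b + gℤ`, and every `n` can be moved past `N` by adding a multiple of `m`. Writing
`d = gcd(b, g)`, `-b = dξ`, `g = dγ`, `m = dμ` with `ξ` prime to `γ`, units of `ℤ/γ` lift
to units of `ℤ/μ`, so some `ξ + γk` is prime to `μ`; hence `gcd(a n - b, m) = d` for
arbitrarily large `n`. Then `a ≤ d ∣ a`, so `a = d`, which divides both `b` and `m`.
-/

namespace Int

theorem isCoprime_natAbs_right {x y : ℤ} : IsCoprime x y.natAbs ↔ IsCoprime x y := by
  simp only [isCoprime_iff_gcd_eq_one, gcd_def, natAbs_natCast]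

theorem exists_isCoprime_add_mul {ξ γ μ : ℤ} (hμ : μ ≠ 0) (hγμ : γ ∣ μ)
    (hξ : IsCoprime ξ γ) : ∃ k, IsCoprime (ξ + γ * k) μ := by
  have : NeZero μ.natAbs := ⟨natAbs_ne_zero.mpr hμ⟩
  have hdvd : γ.natAbs ∣ μ.natAbs := natAbs_dvd_natAbs.mpr hγμ
  obtain ⟨u, hu⟩ := ZMod.unitsMap_surjective hdvd
    (ZMod.unitOfIsCoprime ξ (isCoprime_natAbs_right.mpr hξ))
  set y : ℤ := ZMod.cast (u : ZMod μ.natAbs)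
  have hyξ : (y : ZMod γ.natAbs) = ξ := by
    rw [ZMod.intCast_cast, ← ZMod.unitsMap_val hdvd u, hu, ZMod.coe_unitOfIsCoprime]
  obtain ⟨k, hk⟩ := natAbs_dvd.mp ((ZMod.intCast_eq_intCast_iff_dvd_sub ξ y _).mp hyξ.symm)
  have hyμ : IsCoprime y μ := by
    rw [← isCoprime_natAbs_right, isCoprime_comm, ← ZMod.coe_int_isUnit_iff_isCoprime,
      ZMod.intCast_zmod_cast]
    exact u.isUnit
  exact ⟨k, by rwa [← hk, add_sub_cancel]⟩

theorem exists_gcd_add_mul_eq (x : ℤ) {g m : ℤ} (hm : m ≠ 0) (hgm : g ∣ m) :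
    ∃ k, gcd (x + g * k) m = gcd x g := by
  have hg : g ≠ 0 := by rintro rfl; exact hm (zero_dvd_iff.mp hgm)
  obtain ⟨ξ, γ, hcop, hx, hgγ⟩ := exists_gcd_one (gcd_pos_of_ne_zero_right x hg)
  set d := gcd x g
  clear_value d
  subst hx hgγ
  obtain ⟨μ, rfl⟩ := hgm
  have hγμ : γ * μ ≠ 0 := by rintro h; exact hm (by rw [mul_right_comm, h, zero_mul])
  obtain ⟨k, hk⟩ := exists_isCoprime_add_mul hγμ (dvd_mul_right γ μ)
    (isCoprime_iff_gcd_eq_one.mpr hcop)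
  refine ⟨k, ?_⟩
  calc gcd (ξ * d + γ * d * k) (γ * d * μ) = gcd ((ξ + γ * k) * d) (γ * μ * d) := by ring_nf
    _ = d := by rw [gcd_mul_right, isCoprime_iff_gcd_eq_one.mp hk]; simp

theorem exists_gcd_mul_sub_eq (a b : ℤ) {m : ℤ} (hm : m ≠ 0) :
    ∃ n, gcd (a * n - b) m = gcd b (gcd a m) := by
  obtain ⟨k, hk⟩ := exists_gcd_add_mul_eq (-b) hm (gcd_dvd_right a m)
  refine ⟨k * gcdA a m, ?_⟩
  have hbezout := gcd_eq_gcd_ab a m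
  calc gcd (a * (k * gcdA a m) - b) m = gcd (-b + gcd a m * k - m * (k * gcdB a m)) m := by
        rw [hbezout]; ring_nf
    _ = gcd b (gcd a m) := by rw [gcd_sub_mul_left_left, hk, neg_gcd]

theorem exists_le_gcd_mul_sub_eq (a b : ℤ) {m : ℤ} (hm : 0 < m) (N : ℤ) :
    ∃ n, N ≤ n ∧ gcd (a * n - b) m = gcd b (gcd a m) := by
  obtain ⟨n, hn⟩ := exists_gcd_mul_sub_eq a b hm.ne'
  refine ⟨n + m * |N - n|, ?_, ?_⟩
  · nlinarith [le_abs_self (N - n), abs_nonneg (N - n)]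
  · rw [← hn, mul_add, add_sub_right_comm, mul_left_comm, gcd_add_mul_left_left]

end Int

/-- Let a, m be integers with a ≥ 1, m ≥ 1, and b an integer. If there exists
an integer N such that gcd(a·n − b, m) ≥ a for every integer n ≥ N, then
a divides b and a divides m. -/
theorem stmt12 (a b m : ℤ) (ha : 1 ≤ a) (hm : 1 ≤ m)
    (h : ∃ N : ℤ, ∀ n : ℤ, N ≤ n → a ≤ (Int.gcd (a * n - b) m : ℤ)) :
    a ∣ b ∧ a ∣ m := by
  obtain ⟨N, hN⟩ := h
  obtain ⟨n, hn, hgcd⟩ := Int.exists_le_gcd_mul_sub_eq a b hm N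
  set d := Int.gcd b (Int.gcd a m)
  have hda : (d : ℤ) ∣ a := (Int.gcd_dvd_right ..).trans (Int.gcd_dvd_left ..)
  have had : a = d := le_antisymm (hgcd ▸ hN n hn) (Int.le_of_dvd (by omega) hda)
  rw [had]
  exact ⟨Int.gcd_dvd_left .., (Int.gcd_dvd_right ..).trans (Int.gcd_dvd_right ..)⟩
end

section
/- Let T ≥ 0 be an integer and let μ, λ be Young diagrams. Say a Young diagram ρ' is obtained from a Young diagram ρ by one cell operation if, as sets of cells, ρ' = ρ ∪ {c} for a single cell c ∉ ρ, or ρ = ρ' ∪ {c} for a single cell c ∉ ρ', or ρ' = (ρ \ {c}) ∪ {c'} for cells c ∈ ρ, c' ∉ ρ \ {c} with c ≠ c'. If there is a chain of Young diagrams μ = ρ_0, ρ_1, ..., ρ_r = λ with r ≤ T in which each ρ_{t+1} is obtained from ρ_t by one cell operation, then 2·Σ_{k≥1} k·λ_k ≥ 2·Σ_{k≥1} k·μ_k − 2·l(μ)·T − 3·T² − T. -/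
/-- ρ' is obtained from ρ by one cell operation: adding a cell, deleting a
cell, or moving a cell (deleting a cell and then adding a different one). -/
def CellOp (ρ ρ' : YoungDiagram) : Prop :=
  (∃ c, c ∉ ρ.cells ∧ ρ'.cells = insert c ρ.cells) ∨
  (∃ c, c ∉ ρ'.cells ∧ ρ.cells = insert c ρ'.cells) ∨
  (∃ c c', c ∈ ρ.cells ∧ c' ∉ ρ.cells.erase c ∧ c ≠ c' ∧
    ρ'.cells = insert c' (ρ.cells.erase c))

lemma mem_fst_lt_colLen {ρ : YoungDiagram} {c : ℕ × ℕ} (hc : c ∈ ρ.cells) :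
    c.1 < ρ.colLen 0 := by
  rw [← YoungDiagram.mem_iff_lt_colLen]
  exact ρ.up_left_mem le_rfl (Nat.zero_le _) (by simpa using hc)

lemma colLen_le_of_subset_insert {ρ ρ' : YoungDiagram} {c : ℕ × ℕ}
    (h : ρ'.cells ⊆ insert c ρ.cells) : ρ'.colLen 0 ≤ ρ.colLen 0 + 1 := by
  by_contra hlt
  push_neg at hlt
  have h1 : (ρ.colLen 0, 0) ∈ ρ'.cells := by
    rw [YoungDiagram.mem_cells, YoungDiagram.mem_iff_lt_colLen]; omega
  have h2 : (ρ.colLen 0 + 1, 0) ∈ ρ'.cells := by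
    rw [YoungDiagram.mem_cells, YoungDiagram.mem_iff_lt_colLen]; omega
  have h1' := h h1
  have h2' := h h2
  simp only [Finset.mem_insert, YoungDiagram.mem_cells,
    YoungDiagram.mem_iff_lt_colLen] at h1' h2'
  rcases h1' with h1' | h1'
  · rcases h2' with h2' | h2'
    · have := h1'.trans h2'.symm
      simp at this
    · omega
  · rcases h2' with h2' | h2' <;> omega

lemma cellOp_colLen {ρ ρ' : YoungDiagram} (h : CellOp ρ ρ') :
    ρ'.colLen 0 ≤ ρ.colLen 0 + 1 := by
  rcases h with ⟨c, _, hc⟩ | ⟨c, _, hc⟩ | ⟨c, c', _, _, _, hc⟩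
  · exact colLen_le_of_subset_insert (c := c) (by rw [hc])
  · refine colLen_le_of_subset_insert (c := c) (fun x hx => ?_)
    have hx' : x ∈ ρ.cells := by rw [hc]; exact Finset.mem_insert_of_mem hx
    exact Finset.mem_insert_of_mem hx'
  · exact colLen_le_of_subset_insert (c := c')
      (by rw [hc]; exact Finset.insert_subset_insert _ (Finset.erase_subset _ _))

lemma cellOp_wr {ρ ρ' : YoungDiagram} (h : CellOp ρ ρ') :
    (wr ρ' : ℤ) ≥ (wr ρ : ℤ) - (ρ.colLen 0 : ℤ) := by
  rcases h with ⟨c, hc, hcells⟩ | ⟨c, hc, hcells⟩ | ⟨c, c', hc, hc', hne, hcells⟩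
  · have : wr ρ' = (c.1 + 1) + wr ρ := by
      rw [wr, hcells, Finset.sum_insert hc]; rfl
    have h0 : (0:ℤ) ≤ (ρ.colLen 0 : ℤ) := Int.natCast_nonneg _
    rw [this]; push_cast; omega
  · have hcmem : c ∈ ρ.cells := by rw [hcells]; exact Finset.mem_insert_self _ _
    have hlt := mem_fst_lt_colLen hcmem
    have : wr ρ = (c.1 + 1) + wr ρ' := by
      rw [wr, hcells, Finset.sum_insert hc]; rfl
    rw [this]; push_cast; omega
  · have hlt := mem_fst_lt_colLen hc
    have h1 : wr ρ' = (c'.1 + 1) + ∑ x ∈ ρ.cells.erase c, (x.1 + 1) := by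
      rw [wr, hcells, Finset.sum_insert hc']
    have h2 : wr ρ = (c.1 + 1) + ∑ x ∈ ρ.cells.erase c, (x.1 + 1) :=
      (Finset.add_sum_erase ρ.cells (fun x => x.1 + 1) hc).symm
    rw [h1, h2]; push_cast; omega

/-- If there is a chain μ = ρ_0, ρ_1, ..., ρ_r = λ of Young diagrams with
r ≤ T, each obtained from the previous one by one cell operation, then
2·Σ_{k≥1} k·λ_k ≥ 2·Σ_{k≥1} k·μ_k − 2·l(μ)·T − 3·T² − T.
(Here `μ.colLen 0` is the number of nonempty rows l(μ).) -/
theorem stmt15 (T : ℕ) (μ lam : YoungDiagram)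
    (h : ∃ r : ℕ, r ≤ T ∧ ∃ ρ : ℕ → YoungDiagram, ρ 0 = μ ∧ ρ r = lam ∧
      ∀ t, t < r → CellOp (ρ t) (ρ (t + 1))) :
    (2 * wr lam : ℤ) ≥
      2 * (wr μ : ℤ) - 2 * (μ.colLen 0 : ℤ) * (T : ℤ) - 3 * (T : ℤ) ^ 2 - (T : ℤ) := by
  obtain ⟨r, hrT, ρ, h0, hr, hstep⟩ := h
  have key : ∀ t, t ≤ r →
      (ρ t).colLen 0 ≤ μ.colLen 0 + t ∧
      (2 * wr (ρ t) : ℤ) ≥ 2 * (wr μ : ℤ) - 2 * (μ.colLen 0 : ℤ) * t - (t : ℤ) ^ 2 := by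
    intro t
    induction t with
    | zero => intro _; simp [h0]
    | succ n ih =>
      intro hn
      obtain ⟨ih1, ih2⟩ := ih (by omega)
      have hop := hstep n (by omega)
      have hcl := cellOp_colLen hop
      have hwr := cellOp_wr hop
      constructor
      · omega
      · have hcl' : ((ρ n).colLen 0 : ℤ) ≤ (μ.colLen 0 : ℤ) + n := by exact_mod_cast ih1
        push_cast
        nlinarith [hwr, ih2]
  obtain ⟨_, h2⟩ := key r le_rfl
  rw [hr] at h2
  have hrT' : (r : ℤ) ≤ (T : ℤ) := by exact_mod_cast hrT
  have h0' : (0:ℤ) ≤ (μ.colLen 0 : ℤ) := Int.natCast_nonneg _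
  have h0r : (0:ℤ) ≤ (r:ℤ) := Int.natCast_nonneg _
  nlinarith [h2]
end
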